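/- If Γ is a connected finite simplicial graph in the pincushion class 𝒢^(∞) with more than one vertex and with no pins, then Γ is isomorphic to a pinning Φ_{(Γ',v₁)}(Γ₁) for some graphs Γ', Γ₁ ∈ 𝒢^(∞) with Γ₁ having more than one vertex and some vertex v₁ of Γ'. -/

import Mathlib

namespace PincushionPaper

/-- Disjoint union of two simplicial graphs. -/
def disjUnion {V W : Type} (G : SimpleGraph V) (H : SimpleGraph W) :
    SimpleGraph (V ⊕ W) where
  Adj x y :=
    match x, y with
    | Sum.inl a, Sum.inl b => G.Adj a b
    | Sum.inr a, Sum.inr b => H.Adj a b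
    | _, _ => False
  symm := ⟨by
    rintro (a | a) (b | b) h
    · exact G.adj_symm h
    · exact h.elim
    · exact h.elim
    · exact H.adj_symm h⟩
  loopless := ⟨by
    rintro (a | a) h
    · exact G.irrefl h
    · exact H.irrefl h⟩

/-- The pinning `Φ_{(G,v)}(H)` of `H` to `G` at the vertex `v` of `G`:
vertex set `V ⊔ W`, edges those of `G` and `H` together with an edge
from every vertex of `H` to `v`. -/
def pinning {V W : Type} (G : SimpleGraph V) (v : V) (H : SimpleGraph W) :
    SimpleGraph (V ⊕ W) where
  Adj x y :=
    match x, y with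
    | Sum.inl a, Sum.inl b => G.Adj a b
    | Sum.inr a, Sum.inr b => H.Adj a b
    | Sum.inl a, Sum.inr _ => a = v
    | Sum.inr _, Sum.inl b => b = v
  symm := ⟨by
    rintro (a | a) (b | b) h
    · exact G.adj_symm h
    · exact h
    · exact h
    · exact H.adj_symm h⟩
  loopless := ⟨by
    rintro (a | a) h
    · exact G.irrefl h
    · exact H.irrefl h⟩

/-- Graphs obtained from the empty graph by repeatedly appending a graph
satisfying `P`, each appended graph being either placed as a disjoint union
with the graph built so far, or pinned to the graph built so far at one of
its vertices; the resulting class is closed under graph isomorphism. -/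
inductive BuiltFrom (P : ∀ V : Type, SimpleGraph V → Prop) :
    ∀ V : Type, SimpleGraph V → Prop
  | empty : BuiltFrom P Empty ⊥
  | disj {V W : Type} {G : SimpleGraph V} {H : SimpleGraph W} :
      BuiltFrom P V G → P W H → BuiltFrom P (V ⊕ W) (disjUnion G H)
  | pin {V W : Type} {G : SimpleGraph V} {H : SimpleGraph W} (v : V) :
      BuiltFrom P V G → P W H → BuiltFrom P (V ⊕ W) (pinning G v H)
  | iso {V W : Type} {G : SimpleGraph V} {H : SimpleGraph W} :
      BuiltFrom P V G → (G ≃g H) → BuiltFrom P W H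

/-- The classes `𝒢^(m)`: `𝒢^(0)` consists of the one-vertex graph only
(up to isomorphism), and `𝒢^(m+1)` consists of the graphs built from
graphs in `𝒢^(m)` by disjoint unions and pinnings. -/
def GClass : ℕ → ∀ V : Type, SimpleGraph V → Prop
  | 0 => fun _ G => Nonempty (G ≃g (⊥ : SimpleGraph Unit))
  | m + 1 => BuiltFrom (GClass m)

/-- The pincushion class `𝒢^(∞) = ⋃ₘ 𝒢^(m)`. -/
def Pincushion (V : Type) (G : SimpleGraph V) : Prop := ∃ m, GClass m V G

/-- A pin of a graph: a vertex adjacent to exactly one other vertex. -/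
def IsPin {V : Type} (G : SimpleGraph V) (v : V) : Prop := ∃! w, G.Adj v w

end PincushionPaper

/-!
Look at the last step in the construction of a graph in `𝒢^(m+1)`. Appended pieces without
vertices can be discarded, and a connected graph is not a disjoint union of two nonempty graphs,
so a connected graph in `𝒢^(m+1)` is isomorphic either to a single graph of `𝒢^(m)`, where
induction on `m` applies, or to a pinning `Φ_{(Γ',v)}(Γ₁)` with `Γ' ∈ 𝒢^(m+1)`, `Γ₁ ∈ 𝒢^(m)` and
`Γ₁` nonempty. In the second case `Γ₁` has more than one vertex, since a single pinned vertex
would be a pin.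
-/

namespace PincushionPaper

open SimpleGraph

variable {V W : Type} {G : SimpleGraph V} {H : SimpleGraph W}

theorem IsPin.map (e : G ≃g H) {v : V} (hv : IsPin G v) : IsPin H (e v) := by
  obtain ⟨w, hvw, hw⟩ := hv
  refine ⟨e w, e.map_adj_iff.mpr hvw, fun y hy => ?_⟩
  have hvy : G.Adj v (e.symm y) := by simpa using e.symm.map_adj_iff.mpr hy
  rw [← e.apply_symm_apply y, hw _ hvy]

theorem not_isPin_of_iso (e : G ≃g H) (h : ∀ v, ¬ IsPin G v) (w : W) : ¬ IsPin H w :=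
  fun hw => h _ (hw.map e.symm)

def isoOfIsEmptyRight [IsEmpty W] {K : SimpleGraph (V ⊕ W)}
    (h : ∀ a b, K.Adj (.inl a) (.inl b) ↔ G.Adj a b) : K ≃g G where
  toEquiv := Equiv.sumEmpty V W
  map_rel_iff' := by
    rintro (a | a) (b | b)
    all_goals first | exact isEmptyElim ‹W› | exact (h a b).symm

def isoOfIsEmptyLeft [IsEmpty V] {K : SimpleGraph (V ⊕ W)}
    (h : ∀ a b, K.Adj (.inr a) (.inr b) ↔ H.Adj a b) : K ≃g H where
  toEquiv := Equiv.emptySum V W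
  map_rel_iff' := by
    rintro (a | a) (b | b)
    all_goals first | exact isEmptyElim ‹V› | exact (h a b).symm

theorem isEmpty_or_isEmpty_of_connected_disjUnion (h : (disjUnion G H).Connected) :
    IsEmpty V ∨ IsEmpty W := by
  rw [or_iff_not_imp_left, not_isEmpty_iff]
  rintro ⟨a⟩
  refine ⟨fun b => ?_⟩
  obtain ⟨p⟩ := h.preconnected (.inl a) (.inr b)
  obtain ⟨⟨⟨x, y⟩, hxy⟩, -, hx, hy⟩ := p.exists_boundary_dart {x | x.isLeft} rfl (by simp)
  rcases x with x | x <;> rcases y with y | y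
  · simp at hy
  · exact hxy.elim
  all_goals simp at hx

theorem isPin_pinning_of_subsingleton [Subsingleton W] (v : V) (w : W) :
    IsPin (pinning G v H) (.inr w) := by
  refine ⟨.inl v, rfl, ?_⟩
  rintro (b | b) hb
  · exact congrArg Sum.inl hb
  · exact absurd hb (Subsingleton.elim w b ▸ H.irrefl)

def IsPincushionPinning (G : SimpleGraph V) : Prop :=
  ∃ (V' W : Type) (G' : SimpleGraph V') (H : SimpleGraph W) (v₁ : V'),
    Pincushion V' G' ∧ Pincushion W H ∧ Nontrivial W ∧ Nonempty (G ≃g pinning G' v₁ H)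

theorem IsPincushionPinning.of_iso (e : G ≃g H) (h : IsPincushionPinning H) :
    IsPincushionPinning G := by
  obtain ⟨V', W', G', H', v₁, hG', hH', hW', ⟨f⟩⟩ := h
  exact ⟨V', W', G', H', v₁, hG', hH', hW', ⟨e.trans f⟩⟩

def IsAtomOrPinning (P : ∀ V : Type, SimpleGraph V → Prop) (G : SimpleGraph V) : Prop :=
  (∃ (W : Type) (H : SimpleGraph W), P W H ∧ Nonempty (G ≃g H)) ∨
    ∃ (V' W : Type) (G' : SimpleGraph V') (H : SimpleGraph W) (v : V'),
      BuiltFrom P V' G' ∧ P W H ∧ Nonempty W ∧ Nonempty (G ≃g pinning G' v H)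

theorem IsAtomOrPinning.of_iso {P : ∀ V : Type, SimpleGraph V → Prop} (e : G ≃g H)
    (h : IsAtomOrPinning P H) : IsAtomOrPinning P G := by
  rcases h with ⟨W', H', hH', ⟨f⟩⟩ | ⟨V', W', G', H', v, hG', hH', hW', ⟨f⟩⟩
  · exact .inl ⟨W', H', hH', ⟨e.trans f⟩⟩
  · exact .inr ⟨V', W', G', H', v, hG', hH', hW', ⟨e.trans f⟩⟩

theorem BuiltFrom.isAtomOrPinning_of_connected {P : ∀ V : Type, SimpleGraph V → Prop}
    (hG : BuiltFrom P V G) (hconn : G.Connected) : IsAtomOrPinning P G := by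
  induction hG with
  | empty => exact isEmptyElim hconn.nonempty.some
  | @disj V' W' G' H' _ hH ih =>
    rcases isEmpty_or_isEmpty_of_connected_disjUnion hconn with hV' | hW'
    · exact .inl ⟨W', H', hH, ⟨isoOfIsEmptyLeft fun _ _ => Iff.rfl⟩⟩
    · have e : disjUnion G' H' ≃g G' := isoOfIsEmptyRight fun _ _ => Iff.rfl
      exact (ih (e.connected_iff.mp hconn)).of_iso e
  | @pin V' W' G' H' v hG' hH ih =>
    rcases isEmpty_or_nonempty W' with hW' | hW'
    · have e : pinning G' v H' ≃g G' := isoOfIsEmptyRight fun _ _ => Iff.rfl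
      exact (ih (e.connected_iff.mp hconn)).of_iso e
    · exact .inr ⟨V', W', G', H', v, hG', hH, hW', ⟨.refl⟩⟩
  | iso _ e ih => exact (ih (e.connected_iff.mpr hconn)).of_iso e.symm

theorem isPincushionPinning_of_gClass :
    ∀ (m : ℕ) {V : Type} {G : SimpleGraph V}, GClass m V G → G.Connected → Nontrivial V →
      (∀ v, ¬ IsPin G v) → IsPincushionPinning G
  | 0, _, _, ⟨e⟩, _, _, _ => (not_nontrivial Unit (e.toEquiv.symm.nontrivial)).elim
  | m + 1, _, _, hG, hconn, _, hnopin => by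
    rcases hG.isAtomOrPinning_of_connected hconn with
      ⟨W, H, hH, ⟨e⟩⟩ | ⟨V', W, G', H, v, hG', hH, hW, ⟨e⟩⟩
    · exact .of_iso e (isPincushionPinning_of_gClass m hH (e.connected_iff.mp hconn)
        e.toEquiv.symm.nontrivial (not_isPin_of_iso e hnopin))
    · rcases subsingleton_or_nontrivial W with hW₁ | hW₁
      · exact absurd (isPin_pinning_of_subsingleton v hW.some) (not_isPin_of_iso e hnopin _)
      · exact ⟨V', W, G', H, v, ⟨m + 1, hG'⟩, ⟨m, hH⟩, hW₁, ⟨e⟩⟩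

end PincushionPaper

open PincushionPaper

/-- A connected pincushion graph with more than one vertex and no pins is
isomorphic to a pinning `Φ_{(Γ',v₁)}(Γ₁)` with `Γ', Γ₁ ∈ 𝒢^(∞)` and `Γ₁`
having more than one vertex. -/
theorem pincushion_no_pin_structure {V : Type} [Fintype V] (G : SimpleGraph V)
    (hG : Pincushion V G) (hconn : G.Connected) (hcard : 1 < Fintype.card V)
    (hnopin : ∀ v : V, ¬ IsPin G v) :
    ∃ (V' W : Type) (G' : SimpleGraph V') (H : SimpleGraph W) (v₁ : V'),
      Pincushion V' G' ∧ Pincushion W H ∧ Nontrivial W ∧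
        Nonempty (G ≃g pinning G' v₁ H) :=
  let ⟨m, hm⟩ := hG
  isPincushionPinning_of_gClass m hm hconn (Fintype.one_lt_card_iff_nontrivial.mp hcard) hnopin
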